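/- arXiv:2204.00254 — 4 statements merged into one kernel-verified Lean document; each statement's English description precedes it below -/
import Mathlib

section
/- Let f : [τ₀, τ₁] → ℝ be nonnegative and bounded, with τ₀ ≥ 0. Suppose there exist constants θ ∈ [0,1), A, B ≥ 0 and α > 0 such that for all τ₀ ≤ t < s ≤ τ₁ one has f(t) ≤ θ f(s) + A/(s-t)^α + B. Then there exists a constant C depending only on α and θ such that for all τ₀ ≤ t < s ≤ τ₁, f(t) ≤ C (A/(s-t)^α + B). -/
open Finset Filter

private lemma geomAux {r : ℝ} (h0 : 0 ≤ r) (h1 : r < 1) (n : ℕ) :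
    ∑ i ∈ Finset.range n, r ^ i ≤ (1 - r)⁻¹ := by
  rw [geom_sum_eq h1.ne, div_le_iff_of_neg (by linarith : r - 1 < 0)]
  have h2 : (1 - r)⁻¹ * (r - 1) = -1 := by
    rw [inv_mul_eq_div, div_eq_iff (by linarith : (1:ℝ) - r ≠ 0)]; ring
  rw [h2]
  have : (0:ℝ) ≤ r ^ n := pow_nonneg h0 n
  linarith

set_option maxHeartbeats 1000000 in
/-- Iteration/hole-filling lemma: the constant `C` depends only on `α` and `θ`. -/
theorem stmt0 (α θ : ℝ) (hα : 0 < α) (hθ0 : 0 ≤ θ) (hθ1 : θ < 1) :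
    ∃ C : ℝ, 0 < C ∧
      ∀ (f : ℝ → ℝ) (A B τ₀ τ₁ : ℝ), 0 ≤ τ₀ → 0 ≤ A → 0 ≤ B →
        (∀ t ∈ Set.Icc τ₀ τ₁, 0 ≤ f t) →
        BddAbove (f '' Set.Icc τ₀ τ₁) →
        (∀ t s : ℝ, τ₀ ≤ t → t < s → s ≤ τ₁ →
          f t ≤ θ * f s + A / (s - t) ^ α + B) →
        ∀ t s : ℝ, τ₀ ≤ t → t < s → s ≤ τ₁ →
          f t ≤ C * (A / (s - t) ^ α + B) := by
  set q : ℝ := (1 + θ) / 2 with hq_def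
  have hq0 : 0 < q := by simp only [hq_def]; linarith
  have hq1 : q < 1 := by simp only [hq_def]; linarith
  have hθq : θ < q := by simp only [hq_def]; linarith
  set lam : ℝ := q ^ (1 / α) with hlam_def
  have hlam0 : 0 < lam := Real.rpow_pos_of_pos hq0 _
  have hlam1 : lam < 1 := Real.rpow_lt_one hq0.le hq1 (by positivity)
  have hlamα : lam ^ α = q := by
    rw [hlam_def, ← Real.rpow_mul hq0.le, one_div_mul_cancel hα.ne', Real.rpow_one]
  have hθq' : θ / q < 1 := (div_lt_one hq0).2 hθq
  have hθq0 : 0 ≤ θ / q := div_nonneg hθ0 hq0.le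
  have h1lam : 0 < 1 - lam := by linarith
  set C1 : ℝ := ((1 - lam) ^ α)⁻¹ * (1 - θ / q)⁻¹ with hC1_def
  set C2 : ℝ := (1 - θ)⁻¹ with hC2_def
  have hα1lam : 0 < (1 - lam) ^ α := Real.rpow_pos_of_pos h1lam _
  have hC1 : 0 < C1 := by
    apply mul_pos (inv_pos.2 hα1lam) (inv_pos.2 (by linarith))
  have hC2 : 0 < C2 := inv_pos.2 (by linarith)
  refine ⟨C1 + C2, by positivity, ?_⟩
  intro f A B τ₀ τ₁ hτ₀ hA hB hf0 hbdd hiter t s ht hts hsτ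
  obtain ⟨M, hM⟩ := hbdd
  have hst : 0 < s - t := by linarith
  set g : ℕ → ℝ := fun i => s - lam ^ i * (s - t) with hg_def
  have hg0 : g 0 = t := by simp [hg_def]
  have hglt : ∀ i, g i < g (i + 1) := by
    intro i
    simp only [hg_def]
    have : lam ^ (i + 1) < lam ^ i := by
      rw [pow_succ]
      nlinarith [pow_pos hlam0 i]
    nlinarith
  have hgmem : ∀ i, g i ∈ Set.Icc τ₀ τ₁ := by
    intro i
    have h1 : lam ^ i ≤ 1 := pow_le_one₀ hlam0.le hlam1.le
    have h2 : 0 < lam ^ i := pow_pos hlam0 i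
    constructor
    · simp only [hg_def]; nlinarith
    · simp only [hg_def]; nlinarith
  have hpowα : ∀ i : ℕ, ((lam : ℝ) ^ i) ^ α = q ^ i := by
    intro i
    rw [← Real.rpow_natCast lam i, ← Real.rpow_natCast q i,
      ← Real.rpow_mul hlam0.le, mul_comm, Real.rpow_mul hlam0.le, hlamα]
  set S : ℝ := A / ((1 - lam) ^ α * (s - t) ^ α) with hS_def
  have hstα : 0 < (s - t) ^ α := Real.rpow_pos_of_pos hst _
  have hS0 : 0 ≤ S := div_nonneg hA (by positivity)
  have hstep : ∀ i, f (g i) ≤ θ * f (g (i + 1)) + (q ^ i)⁻¹ * S + B := by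
    intro i
    have hgap : g (i + 1) - g i = lam ^ i * ((1 - lam) * (s - t)) := by
      simp only [hg_def, pow_succ]; ring
    have := hiter (g i) (g (i + 1)) (hgmem i).1 (hglt i) (hgmem (i + 1)).2
    rw [hgap] at this
    refine this.trans ?_
    have hmul : (lam ^ i * ((1 - lam) * (s - t))) ^ α
        = q ^ i * ((1 - lam) ^ α * (s - t) ^ α) := by
      rw [Real.mul_rpow (by positivity) (by positivity),
        Real.mul_rpow h1lam.le hst.le, hpowα]
    rw [hmul]
    have : A / (q ^ i * ((1 - lam) ^ α * (s - t) ^ α)) = (q ^ i)⁻¹ * S := by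
      rw [hS_def, div_mul_eq_div_div_swap, div_div]
      ring
    rw [this]
  have key : ∀ N, f t ≤ θ ^ N * f (g N)
      + (∑ i ∈ Finset.range N, (θ / q) ^ i) * S
      + (∑ i ∈ Finset.range N, θ ^ i) * B := by
    intro N
    induction N with
    | zero => simp [hg0]
    | succ N ih =>
      have hθN : (0:ℝ) ≤ θ ^ N := pow_nonneg hθ0 N
      have h2 : θ ^ N * f (g N) ≤ θ ^ N * (θ * f (g (N + 1)) + (q ^ N)⁻¹ * S + B) :=
        mul_le_mul_of_nonneg_left (hstep N) hθN
      have h3 : (θ / q) ^ N = θ ^ N * (q ^ N)⁻¹ := by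
        rw [div_pow, div_eq_mul_inv]
      calc f t ≤ θ ^ N * f (g N)
            + (∑ i ∈ Finset.range N, (θ / q) ^ i) * S
            + (∑ i ∈ Finset.range N, θ ^ i) * B := ih
        _ ≤ θ ^ N * (θ * f (g (N + 1)) + (q ^ N)⁻¹ * S + B)
            + (∑ i ∈ Finset.range N, (θ / q) ^ i) * S
            + (∑ i ∈ Finset.range N, θ ^ i) * B := by linarith
        _ = θ ^ (N + 1) * f (g (N + 1))
            + (∑ i ∈ Finset.range (N + 1), (θ / q) ^ i) * S
            + (∑ i ∈ Finset.range (N + 1), θ ^ i) * B := by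
          rw [Finset.sum_range_succ, Finset.sum_range_succ, h3, pow_succ]
          ring
  have hfM : ∀ i, f (g i) ≤ M := fun i => hM ⟨g i, hgmem i, rfl⟩
  have hbound : ∀ N, f t ≤ θ ^ N * M + (C1 * (A / (s - t) ^ α) + C2 * B) := by
    intro N
    have h1 : (∑ i ∈ Finset.range N, (θ / q) ^ i) * S ≤ (1 - θ / q)⁻¹ * S :=
      mul_le_mul_of_nonneg_right (geomAux hθq0 hθq' N) hS0
    have h2 : (∑ i ∈ Finset.range N, θ ^ i) * B ≤ (1 - θ)⁻¹ * B :=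
      mul_le_mul_of_nonneg_right (geomAux hθ0 hθ1 N) hB
    have h3 : θ ^ N * f (g N) ≤ θ ^ N * M :=
      mul_le_mul_of_nonneg_left (hfM N) (pow_nonneg hθ0 N)
    have h4 : (1 - θ / q)⁻¹ * S = C1 * (A / (s - t) ^ α) := by
      rw [hS_def, hC1_def, div_mul_eq_div_div_swap, div_eq_mul_inv, div_eq_mul_inv]
      ring
    rw [h4] at h1
    rw [← hC2_def] at h2
    linarith [key N]
  have hlim : Tendsto (fun N : ℕ => θ ^ N * M + (C1 * (A / (s - t) ^ α) + C2 * B))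
      atTop (nhds (0 * M + (C1 * (A / (s - t) ^ α) + C2 * B))) := by
    exact (((tendsto_pow_atTop_nhds_zero_of_lt_one hθ0 hθ1).mul_const M).add_const _)
  have hfinal : f t ≤ 0 * M + (C1 * (A / (s - t) ^ α) + C2 * B) :=
    ge_of_tendsto' hlim hbound
  rw [zero_mul, zero_add] at hfinal
  refine hfinal.trans ?_
  have hX : 0 ≤ A / (s - t) ^ α := div_nonneg hA hstα.le
  nlinarith [mul_nonneg hC1.le hB, mul_nonneg hC2.le hX]
end

section
/- Let ε > 0, μ > 0, δ(x₁) = ε + x₁², k(x) = x₂/δ(x₁), v₁¹(x) = (k(x)+1/2, x₁(k(x)²−1/4)) and p̄₁¹(x) = 2μ x₁ k(x)/δ(x₁). Then there exists a constant C depending only on μ such that |μ Δ v₁¹(x) − ∇ p̄₁¹(x)| ≤ C/δ(x₁) for all x in the neck region {|x₂| < δ(x₁)/2, |x₁| ≤ 1}. -/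
/-! With `δ = ε + x₁²` and `k = x₂/δ`, the pressure is `p̄₁¹ = 2μx₁x₂/δ² = -μ ∂₁k`. In the first
component the residual is therefore `2μ ∂₁²k = -4μx₂(ε - 3x₁²)/δ³`; in the second, `∂₂p̄₁¹ = 2μx₁/δ²`
cancels `μ ∂₂²(x₁k²)` exactly and leaves `μx₂² ∂₁²(x₁/δ²) = 12μx₂²x₁(x₁² - ε)/δ⁴`. On the neck
`|x₂| ≤ δ/2` and `|x₁| ≤ 1`, while `|ε - 3x₁²| ≤ 3δ` and `|x₁² - ε| ≤ δ`, so both are `O(μ/δ)`. -/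

section NeckProfile

variable {ε : ℝ}

theorem hasDerivAt_const_add_sq (t : ℝ) : HasDerivAt (fun t => ε + t ^ 2) (2 * t) t := by
  simpa using (hasDerivAt_pow 2 t).const_add ε

theorem hasDerivAt_div_const_add_sq (c t : ℝ) (h : ε + t ^ 2 ≠ 0) :
    HasDerivAt (fun t => c / (ε + t ^ 2)) (-(2 * c * t) / (ε + t ^ 2) ^ 2) t :=
  ((hasDerivAt_const t c).div (hasDerivAt_const_add_sq t) h).congr_deriv (by ring)

theorem hasDerivAt_mul_div_const_add_sq_sq (c t : ℝ) (h : ε + t ^ 2 ≠ 0) :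
    HasDerivAt (fun t => c * t / (ε + t ^ 2) ^ 2) (c * (ε - 3 * t ^ 2) / (ε + t ^ 2) ^ 3) t :=
  (((hasDerivAt_id' t).const_mul c).div ((hasDerivAt_const_add_sq t).fun_pow 2)
    (pow_ne_zero 2 h)).congr_deriv (by field_simp; ring)

theorem hasDerivAt_mul_sub_div_const_add_sq_cube (c t : ℝ) (h : ε + t ^ 2 ≠ 0) :
    HasDerivAt (fun t => c * (ε - 3 * t ^ 2) / (ε + t ^ 2) ^ 3)
      (12 * c * t * (t ^ 2 - ε) / (ε + t ^ 2) ^ 4) t := by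
  have hnum : HasDerivAt (fun t => c * (ε - 3 * t ^ 2)) (c * -(3 * (2 * t))) t :=
    ((((hasDerivAt_pow 2 t).const_mul 3).const_sub ε).const_mul c).congr_deriv (by simp)
  exact (hnum.div ((hasDerivAt_const_add_sq t).fun_pow 3) (pow_ne_zero 3 h)).congr_deriv
    (by field_simp; ring)

variable (hε : 0 < ε)
include hε

theorem neck_residual_fst_eq (μ x₁ x₂ : ℝ) :
    μ * (deriv (deriv (fun t => x₂ / (ε + t ^ 2) + 1 / 2)) x₁
          + deriv (deriv (fun t => t / (ε + x₁ ^ 2) + 1 / 2)) x₂)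
        - deriv (fun t => 2 * μ * t * (x₂ / (ε + t ^ 2)) / (ε + t ^ 2)) x₁
      = -4 * μ * x₂ * (ε - 3 * x₁ ^ 2) / (ε + x₁ ^ 2) ^ 3 := by
  have hne : ∀ t : ℝ, ε + t ^ 2 ≠ 0 := fun t => by positivity
  have hvel : deriv (fun t => x₂ / (ε + t ^ 2) + 1 / 2)
      = fun t => -2 * x₂ * t / (ε + t ^ 2) ^ 2 := by
    funext t
    rw [deriv_add_const, (hasDerivAt_div_const_add_sq x₂ t (hne t)).deriv]
    ring
  have hpres : (fun t => 2 * μ * t * (x₂ / (ε + t ^ 2)) / (ε + t ^ 2))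
      = fun t => 2 * μ * x₂ * t / (ε + t ^ 2) ^ 2 := by
    funext t
    field_simp
  have haffine : deriv (deriv fun t => t / (ε + x₁ ^ 2) + 1 / 2) x₂ = 0 := by
    simp [div_eq_mul_inv]
  rw [hvel, hpres, haffine, (hasDerivAt_mul_div_const_add_sq_sq _ x₁ (hne x₁)).deriv,
    (hasDerivAt_mul_div_const_add_sq_sq _ x₁ (hne x₁)).deriv]
  ring

theorem neck_residual_snd_eq (μ x₁ x₂ : ℝ) :
    μ * (deriv (deriv (fun t => t * ((x₂ / (ε + t ^ 2)) ^ 2 - 1 / 4))) x₁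
          + deriv (deriv (fun t => x₁ * ((t / (ε + x₁ ^ 2)) ^ 2 - 1 / 4))) x₂)
        - deriv (fun t => 2 * μ * x₁ * (t / (ε + x₁ ^ 2)) / (ε + x₁ ^ 2)) x₂
      = 12 * μ * x₂ ^ 2 * x₁ * (x₁ ^ 2 - ε) / (ε + x₁ ^ 2) ^ 4 := by
  have hne : ∀ t : ℝ, ε + t ^ 2 ≠ 0 := fun t => by positivity
  have hvel : deriv (fun t => t * ((x₂ / (ε + t ^ 2)) ^ 2 - 1 / 4))
      = fun t => x₂ ^ 2 * (ε - 3 * t ^ 2) / (ε + t ^ 2) ^ 3 - 1 / 4 := by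
    funext t
    have hsplit : (fun t => t * ((x₂ / (ε + t ^ 2)) ^ 2 - 1 / 4))
        = fun t => x₂ ^ 2 * t / (ε + t ^ 2) ^ 2 - t / 4 := by
      funext t
      field_simp
    rw [hsplit]
    exact ((hasDerivAt_mul_div_const_add_sq_sq _ t (hne t)).sub
      ((hasDerivAt_id' t).div_const 4)).deriv
  have htrans : deriv (deriv fun t => x₁ * ((t / (ε + x₁ ^ 2)) ^ 2 - 1 / 4)) x₂
      = 2 * x₁ / (ε + x₁ ^ 2) ^ 2 := by
    simp [div_pow, field]
  have hpres : deriv (fun t => 2 * μ * x₁ * (t / (ε + x₁ ^ 2)) / (ε + x₁ ^ 2)) x₂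
      = 2 * μ * x₁ / (ε + x₁ ^ 2) ^ 2 := by
    simp [field]
  rw [hvel, deriv_sub_const, (hasDerivAt_mul_sub_div_const_add_sq_cube _ x₁ (hne x₁)).deriv,
    htrans, hpres]
  ring

theorem abs_neck_residual_fst_le {μ x₁ x₂ : ℝ} (hμ : 0 ≤ μ) (hx₂ : |x₂| ≤ (ε + x₁ ^ 2) / 2) :
    |-4 * μ * x₂ * (ε - 3 * x₁ ^ 2) / (ε + x₁ ^ 2) ^ 3| ≤ 6 * μ / (ε + x₁ ^ 2) := by
  have hδ : 0 < ε + x₁ ^ 2 := by positivity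
  have hshape : |ε - 3 * x₁ ^ 2| ≤ 3 * (ε + x₁ ^ 2) := by
    rw [abs_le]; constructor <;> nlinarith
  rw [abs_div, abs_mul, abs_mul, abs_of_pos (by positivity : (0 : ℝ) < (ε + x₁ ^ 2) ^ 3),
    abs_mul, abs_neg, abs_of_pos (by norm_num : (0 : ℝ) < 4), abs_of_nonneg hμ]
  calc 4 * μ * |x₂| * |ε - 3 * x₁ ^ 2| / (ε + x₁ ^ 2) ^ 3
      ≤ 4 * μ * ((ε + x₁ ^ 2) / 2) * (3 * (ε + x₁ ^ 2)) / (ε + x₁ ^ 2) ^ 3 := by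
        gcongr
    _ = 6 * μ / (ε + x₁ ^ 2) := by field_simp; ring

theorem abs_neck_residual_snd_le {μ x₁ x₂ : ℝ} (hμ : 0 ≤ μ) (hx₂ : |x₂| ≤ (ε + x₁ ^ 2) / 2)
    (hx₁ : |x₁| ≤ 1) :
    |12 * μ * x₂ ^ 2 * x₁ * (x₁ ^ 2 - ε) / (ε + x₁ ^ 2) ^ 4| ≤ 3 * μ / (ε + x₁ ^ 2) := by
  have hδ : 0 < ε + x₁ ^ 2 := by positivity
  have hshape : |x₁ ^ 2 - ε| ≤ ε + x₁ ^ 2 := by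
    rw [abs_le]; constructor <;> nlinarith
  have hx₂sq : x₂ ^ 2 ≤ ((ε + x₁ ^ 2) / 2) ^ 2 := by
    rw [← sq_abs]; gcongr
  rw [abs_div, abs_mul, abs_mul, abs_mul, abs_of_pos (by positivity : (0 : ℝ) < (ε + x₁ ^ 2) ^ 4),
    abs_mul, abs_of_pos (by norm_num : (0 : ℝ) < 12), abs_of_nonneg hμ,
    abs_of_nonneg (sq_nonneg x₂)]
  calc 12 * μ * x₂ ^ 2 * |x₁| * |x₁ ^ 2 - ε| / (ε + x₁ ^ 2) ^ 4
      ≤ 12 * μ * ((ε + x₁ ^ 2) / 2) ^ 2 * 1 * (ε + x₁ ^ 2) / (ε + x₁ ^ 2) ^ 4 := by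
        gcongr
    _ = 3 * μ / (ε + x₁ ^ 2) := by field_simp; ring

end NeckProfile

/-- Residual estimate `|μ Δ v₁¹ - ∇ p̄₁¹| ≤ C/δ` (componentwise), `C = C(μ)`. -/
theorem stmt10 (μ : ℝ) (hμ : 0 < μ) :
    ∃ C > (0:ℝ), ∀ ε : ℝ, 0 < ε → ∀ x₁ x₂ : ℝ,
      |x₂| < (ε + x₁ ^ 2) / 2 → |x₁| ≤ 1 →
      |μ * (deriv (deriv (fun t => x₂ / (ε + t ^ 2) + 1 / 2)) x₁
            + deriv (deriv (fun t => t / (ε + x₁ ^ 2) + 1 / 2)) x₂)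
         - deriv (fun t => 2 * μ * t * (x₂ / (ε + t ^ 2)) / (ε + t ^ 2)) x₁|
        ≤ C / (ε + x₁ ^ 2) ∧
      |μ * (deriv (deriv (fun t => t * ((x₂ / (ε + t ^ 2)) ^ 2 - 1 / 4))) x₁
            + deriv (deriv (fun t => x₁ * ((t / (ε + x₁ ^ 2)) ^ 2 - 1 / 4))) x₂)
         - deriv (fun t => 2 * μ * x₁ * (t / (ε + x₁ ^ 2)) / (ε + x₁ ^ 2)) x₂|
        ≤ C / (ε + x₁ ^ 2) := by
  refine ⟨6 * μ, by positivity, fun ε hε x₁ x₂ hx₂ hx₁ => ⟨?_, ?_⟩⟩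
  · rw [neck_residual_fst_eq hε]
    exact abs_neck_residual_fst_le hε hμ.le hx₂.le
  · rw [neck_residual_snd_eq hε]
    calc _ ≤ 3 * μ / (ε + x₁ ^ 2) := abs_neck_residual_snd_le hε hμ.le hx₂.le hx₁
      _ ≤ 6 * μ / (ε + x₁ ^ 2) := by gcongr; linarith
end

section
/- Let ε > 0, δ(x₁) = ε + x₁², k(x) = x₂/δ(x₁), and define v₁³(x) = ψ₃(k+1/2) + ( 1 − 4x₁²/δ − 5x₂ k , 2x₁ k (2 − 4x₁²/δ − 3x₂ k) ) (k² − 1/4), where ψ₃ = (x₂, −x₁) and δ = δ(x₁). Then v₁³ is divergence free on the neck region {|x₂| < δ(x₁)/2}. -/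
/-!
Both partial derivatives follow from the chain rule in `k = x₂/δ`, using `∂₁k = -2x₁k/δ` and
`∂₂k = 1/δ`; once `δ` is cleared, the divergence is a polynomial identity in `x₁, x₂, δ`.
-/

-- The paper's `δ(x₁)` and `k(x) = x₂/δ(x₁)`.
noncomputable def neckGap (ε x₁ : ℝ) : ℝ := ε + x₁ ^ 2

noncomputable def neckCoord (ε x₁ x₂ : ℝ) : ℝ := x₂ / neckGap ε x₁

variable {ε : ℝ}

theorem neckGap_pos (hε : 0 < ε) (x₁ : ℝ) : 0 < neckGap ε x₁ := by
  unfold neckGap; positivity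

theorem hasDerivAt_neckGap (x₁ : ℝ) : HasDerivAt (neckGap ε) (2 * x₁) x₁ := by
  show HasDerivAt (fun t => ε + t ^ 2) _ _
  simpa using (hasDerivAt_pow 2 x₁).const_add ε

theorem hasDerivAt_div_neckGap {x₁ : ℝ} (hδ : neckGap ε x₁ ≠ 0) (c : ℝ) :
    HasDerivAt (fun t => c / neckGap ε t) (-(2 * x₁) * (c / neckGap ε x₁) / neckGap ε x₁) x₁ := by
  refine ((hasDerivAt_const x₁ c).div (hasDerivAt_neckGap x₁) hδ).congr_deriv ?_
  field_simp; ring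

-- The factor `1 - x₁²/δ` is `ε/δ`, written without `ε` so that `δ` can later be treated as
-- an independent variable.
theorem hasDerivAt_mul_sq_div_neckGap {x₁ : ℝ} (hδ : neckGap ε x₁ ≠ 0) (c : ℝ) :
    HasDerivAt (fun t => c * t ^ 2 / neckGap ε t)
      (2 * c * x₁ * (1 - x₁ ^ 2 / neckGap ε x₁) / neckGap ε x₁) x₁ := by
  refine (((hasDerivAt_pow 2 x₁).const_mul c).div (hasDerivAt_neckGap x₁) hδ).congr_deriv ?_
  field_simp; norm_num; ring

theorem hasDerivAt_neckCoord (x₁ x₂ : ℝ) :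
    HasDerivAt (neckCoord ε x₁) (1 / neckGap ε x₁) x₂ := by
  show HasDerivAt (fun t => t / neckGap ε x₁) _ _
  simpa [one_div] using (hasDerivAt_id x₂).div_const (neckGap ε x₁)

theorem stmt15_general (ε : ℝ) (hε : 0 < ε) (x₁ x₂ : ℝ) :
    ∃ d₁ d₂ : ℝ,
      HasDerivAt (fun t =>
        x₂ * (x₂ / (ε + t ^ 2) + 1 / 2)
          + (1 - 4 * t ^ 2 / (ε + t ^ 2) - 5 * x₂ * (x₂ / (ε + t ^ 2)))
            * ((x₂ / (ε + t ^ 2)) ^ 2 - 1 / 4)) d₁ x₁ ∧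
      HasDerivAt (fun t =>
        -x₁ * (t / (ε + x₁ ^ 2) + 1 / 2)
          + 2 * x₁ * (t / (ε + x₁ ^ 2))
            * (2 - 4 * x₁ ^ 2 / (ε + x₁ ^ 2) - 3 * t * (t / (ε + x₁ ^ 2)))
            * ((t / (ε + x₁ ^ 2)) ^ 2 - 1 / 4)) d₂ x₂ ∧
      d₁ + d₂ = 0 := by
  have hδ := (neckGap_pos hε x₁).ne'
  have dk₁ := hasDerivAt_div_neckGap hδ x₂
  have dk₂ := hasDerivAt_neckCoord (ε := ε) x₁ x₂
  have dv₁ := ((dk₁.add_const (1 / 2)).const_mul x₂).add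
    ((((hasDerivAt_const x₁ 1).sub (hasDerivAt_mul_sq_div_neckGap hδ 4)).sub
      (dk₁.const_mul (5 * x₂))).mul ((dk₁.pow 2).sub_const (1 / 4)))
  have dv₂ := ((dk₂.add_const (1 / 2)).const_mul (-x₁)).add
    (((dk₂.const_mul (2 * x₁)).mul
      (((hasDerivAt_const x₂ 2).sub_const (4 * x₁ ^ 2 / neckGap ε x₁)).sub
        (((hasDerivAt_id x₂).const_mul 3).mul dk₂))).mul ((dk₂.pow 2).sub_const (1 / 4)))
  refine ⟨_, _, dv₁, dv₂, ?_⟩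
  norm_num [neckCoord]
  generalize neckGap ε x₁ = δ at hδ ⊢
  field_simp
  ring

/-- The auxiliary field `v₁³` (matching the rotation `ψ₃ = (x₂, -x₁)`) is
divergence free on the neck region; `k = x₂/δ`, `δ = ε + x₁²`. -/
theorem stmt15 (ε : ℝ) (hε : 0 < ε) (x₁ x₂ : ℝ)
    (hx : |x₂| < (ε + x₁ ^ 2) / 2) :
    ∃ d₁ d₂ : ℝ,
      HasDerivAt (fun t =>
        x₂ * (x₂ / (ε + t ^ 2) + 1 / 2)
          + (1 - 4 * t ^ 2 / (ε + t ^ 2) - 5 * x₂ * (x₂ / (ε + t ^ 2)))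
            * ((x₂ / (ε + t ^ 2)) ^ 2 - 1 / 4)) d₁ x₁ ∧
      HasDerivAt (fun t =>
        -x₁ * (t / (ε + x₁ ^ 2) + 1 / 2)
          + 2 * x₁ * (t / (ε + x₁ ^ 2))
            * (2 - 4 * x₁ ^ 2 / (ε + x₁ ^ 2) - 3 * t * (t / (ε + x₁ ^ 2)))
            * ((t / (ε + x₁ ^ 2)) ^ 2 - 1 / 4)) d₂ x₂ ∧
      d₁ + d₂ = 0 :=
  stmt15_general ε hε x₁ x₂
end

section
/- Let ε > 0, μ > 0, δ(x₁) = ε + x₁², k(x) = x₂/δ(x₁), and p̄₁³(x) = 2μx₁/δ(x₁)² + (12μx₁/δ(x₁))(1 − 2x₁²/δ(x₁)) k(x)². With (v₁³)^{(1)} the first component of the auxiliary field v₁³ as constructed, one has μ ∂_{x₂x₂}(v₁³)^{(1)} − ∂_{x₁}p̄₁³ = μ( 9/(2δ) − 72x₂²/δ³ + 144x₁²x₂²/δ⁴ − 192x₁⁴x₂²/δ⁵ ), and hence |μ ∂_{x₂x₂}(v₁³)^{(1)} − ∂_{x₁}p̄₁³| ≤ C/δ(x₁) on the neck region {|x₂|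 < δ(x₁)/2}, with C depending only on μ. -/
/-!
For fixed `x₁` the velocity component is a quartic polynomial in `x₂`, and the pressure is a
combination of the functions `t ^ (m + 1) / (ε + t ^ 2) ^ (n + 1)`, so the identity is a direct
computation. For the bound put `δ = ε + x₁ ^ 2`, `s = x₁ ^ 2 / δ ∈ [0, 1]` and
`r = x₂ ^ 2 / δ ^ 2 ∈ [0, 1/4]`: then `δ` times the bracket is `9/2 - r (72 - 144 s + 192 s ^ 2)`,
and `45 ≤ 72 - 144 s + 192 s ^ 2 ≤ 120` on `[0, 1]`.
-/

theorem deriv_deriv_quartic (a b c e x : ℝ) :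
    deriv (deriv fun t => a * t ^ 4 + b * t ^ 2 + c * t + e) x = 12 * a * x ^ 2 + 2 * b := by
  have hderiv : deriv (fun t => a * t ^ 4 + b * t ^ 2 + c * t + e) =
      fun t => 4 * a * t ^ 3 + 2 * b * t + c := by
    funext t
    exact ((((hasDerivAt_pow 4 t).const_mul a).add ((hasDerivAt_pow 2 t).const_mul b)).add
      ((hasDerivAt_id t).const_mul c)).add_const e |>.deriv.trans (by norm_num; ring)
  rw [hderiv]
  exact (((hasDerivAt_pow 3 x).const_mul (4 * a)).add
      ((hasDerivAt_id x).const_mul (2 * b))).add_const c |>.deriv.trans (by norm_num; ring)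

theorem hasDerivAt_pow_succ_div_pow_succ (ε x : ℝ) (m n : ℕ) (h : ε + x ^ 2 ≠ 0) :
    HasDerivAt (fun t => t ^ (m + 1) / (ε + t ^ 2) ^ (n + 1))
      ((m + 1) * x ^ m / (ε + x ^ 2) ^ (n + 1) - 2 * (n + 1) * x ^ (m + 2) / (ε + x ^ 2) ^ (n + 2))
      x := by
  have hδ : HasDerivAt (fun t => ε + t ^ 2) (2 * x) x := by
    simpa using (hasDerivAt_pow 2 x).const_add ε
  refine ((hasDerivAt_pow (m + 1) x).div (hδ.pow (n + 1)) (pow_ne_zero _ h)).congr_deriv ?_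
  simp only [Pi.pow_apply, Nat.add_sub_cancel]
  field_simp
  push_cast
  ring

theorem hasDerivAt_pressure (μ ε x₂ x : ℝ) (hε : 0 < ε) :
    HasDerivAt (fun t => 2 * μ * t / (ε + t ^ 2) ^ 2
        + (12 * μ * t / (ε + t ^ 2)) * (1 - 2 * t ^ 2 / (ε + t ^ 2)) * (x₂ / (ε + t ^ 2)) ^ 2)
      (2 * μ * (1 / (ε + x ^ 2) ^ 2 - 4 * x ^ 2 / (ε + x ^ 2) ^ 3)
        + 12 * μ * x₂ ^ 2 * (1 / (ε + x ^ 2) ^ 3 - 12 * x ^ 2 / (ε + x ^ 2) ^ 4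
          + 16 * x ^ 4 / (ε + x ^ 2) ^ 5)) x := by
  have hδ : ∀ t : ℝ, ε + t ^ 2 ≠ 0 := fun t => by positivity
  have h12 := hasDerivAt_pow_succ_div_pow_succ ε x 0 1 (hδ x)
  have h13 := hasDerivAt_pow_succ_div_pow_succ ε x 0 2 (hδ x)
  have h34 := hasDerivAt_pow_succ_div_pow_succ ε x 2 3 (hδ x)
  refine (((h12.const_mul (2 * μ)).add ((h13.sub (h34.const_mul 2)).const_mul
    (12 * μ * x₂ ^ 2))).congr_deriv ?_).congr_of_eventuallyEq (.of_forall fun t => ?_)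
  · push_cast
    ring
  · simp only [Pi.add_apply, Pi.sub_apply]
    field_simp [hδ t]
    ring

theorem deriv_deriv_velocity (d c x : ℝ) :
    deriv (deriv fun t => t * (t / d + 1 / 2) + (c - 5 * t * (t / d)) * ((t / d) ^ 2 - 1 / 4)) x
      = 9 / (2 * d) + 2 * c / d ^ 2 - 60 * x ^ 2 / d ^ 3 := by
  have hquartic : (fun t => t * (t / d + 1 / 2) + (c - 5 * t * (t / d)) * ((t / d) ^ 2 - 1 / 4))
      = fun t => -5 / d ^ 3 * t ^ 4 + (9 / (4 * d) + c / d ^ 2) * t ^ 2 + 1 / 2 * t + -c / 4 := by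
    funext t
    ring
  rw [hquartic, deriv_deriv_quartic]
  ring

theorem velocity_sub_pressure_eq (μ ε x₁ x₂ : ℝ) (hd : ε + x₁ ^ 2 ≠ 0) :
    μ * (9 / (2 * (ε + x₁ ^ 2)) + 2 * (1 - 4 * x₁ ^ 2 / (ε + x₁ ^ 2)) / (ε + x₁ ^ 2) ^ 2
        - 60 * x₂ ^ 2 / (ε + x₁ ^ 2) ^ 3)
      - (2 * μ * (1 / (ε + x₁ ^ 2) ^ 2 - 4 * x₁ ^ 2 / (ε + x₁ ^ 2) ^ 3)
        + 12 * μ * x₂ ^ 2 * (1 / (ε + x₁ ^ 2) ^ 3 - 12 * x₁ ^ 2 / (ε + x₁ ^ 2) ^ 4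
          + 16 * x₁ ^ 4 / (ε + x₁ ^ 2) ^ 5))
      = μ * (9 / (2 * (ε + x₁ ^ 2)) - 72 * x₂ ^ 2 / (ε + x₁ ^ 2) ^ 3
          + 144 * x₁ ^ 2 * x₂ ^ 2 / (ε + x₁ ^ 2) ^ 4
          - 192 * x₁ ^ 4 * x₂ ^ 2 / (ε + x₁ ^ 2) ^ 5) := by
  field_simp
  ring

theorem abs_neck_polynomial_le {r s : ℝ} (hs₀ : 0 ≤ s) (hs₁ : s ≤ 1) (hr₀ : 0 ≤ r)
    (hr₁ : r ≤ 1 / 4) : |9 / 2 - 72 * r + 144 * s * r - 192 * s ^ 2 * r| ≤ 51 / 2 := by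
  have hq₀ : 0 ≤ 72 - 144 * s + 192 * s ^ 2 := by nlinarith [sq_nonneg (s - 3 / 8)]
  have hq₁ : 72 - 144 * s + 192 * s ^ 2 ≤ 120 := by nlinarith
  have hrq₁ : r * (72 - 144 * s + 192 * s ^ 2) ≤ 30 := by nlinarith
  rw [abs_le]
  constructor <;> nlinarith [mul_nonneg hr₀ hq₀]

theorem abs_neck_remainder_le {d x₁ x₂ : ℝ} (hd : 0 < d) (hx₁ : x₁ ^ 2 ≤ d) (hx₂ : |x₂| ≤ d / 2) :
    |9 / (2 * d) - 72 * x₂ ^ 2 / d ^ 3 + 144 * x₁ ^ 2 * x₂ ^ 2 / d ^ 4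
        - 192 * x₁ ^ 4 * x₂ ^ 2 / d ^ 5| ≤ 51 / 2 / d := by
  set s := x₁ ^ 2 / d with hs
  set r := x₂ ^ 2 / d ^ 2 with hr
  have hscaled : 9 / (2 * d) - 72 * x₂ ^ 2 / d ^ 3 + 144 * x₁ ^ 2 * x₂ ^ 2 / d ^ 4
      - 192 * x₁ ^ 4 * x₂ ^ 2 / d ^ 5 = (9 / 2 - 72 * r + 144 * s * r - 192 * s ^ 2 * r) / d := by
    rw [hs, hr]
    field_simp
  have hr₁ : r ≤ 1 / 4 := by
    rw [hr, div_le_iff₀ (by positivity), ← sq_abs]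
    nlinarith [abs_nonneg x₂]
  rw [hscaled, abs_div, abs_of_pos hd]
  gcongr
  exact abs_neck_polynomial_le (by positivity) ((div_le_one hd).2 hx₁) (by positivity) hr₁

/-- Identity and bound for `μ ∂_{x₂x₂}(v₁³)⁽¹⁾ - ∂_{x₁} p̄₁³` on the neck region. -/
theorem stmt16 (μ : ℝ) (hμ : 0 < μ) :
    ∃ C > (0:ℝ), ∀ ε : ℝ, 0 < ε → ∀ x₁ x₂ : ℝ,
      |x₂| < (ε + x₁ ^ 2) / 2 →
      (μ * deriv (deriv (fun t =>
            t * (t / (ε + x₁ ^ 2) + 1 / 2)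
              + (1 - 4 * x₁ ^ 2 / (ε + x₁ ^ 2) - 5 * t * (t / (ε + x₁ ^ 2)))
                * ((t / (ε + x₁ ^ 2)) ^ 2 - 1 / 4))) x₂
          - deriv (fun t =>
              2 * μ * t / (ε + t ^ 2) ^ 2
                + (12 * μ * t / (ε + t ^ 2)) * (1 - 2 * t ^ 2 / (ε + t ^ 2))
                  * (x₂ / (ε + t ^ 2)) ^ 2) x₁
        = μ * (9 / (2 * (ε + x₁ ^ 2)) - 72 * x₂ ^ 2 / (ε + x₁ ^ 2) ^ 3
            + 144 * x₁ ^ 2 * x₂ ^ 2 / (ε + x₁ ^ 2) ^ 4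
            - 192 * x₁ ^ 4 * x₂ ^ 2 / (ε + x₁ ^ 2) ^ 5)) ∧
      |μ * deriv (deriv (fun t =>
            t * (t / (ε + x₁ ^ 2) + 1 / 2)
              + (1 - 4 * x₁ ^ 2 / (ε + x₁ ^ 2) - 5 * t * (t / (ε + x₁ ^ 2)))
                * ((t / (ε + x₁ ^ 2)) ^ 2 - 1 / 4))) x₂
          - deriv (fun t =>
              2 * μ * t / (ε + t ^ 2) ^ 2
                + (12 * μ * t / (ε + t ^ 2)) * (1 - 2 * t ^ 2 / (ε + t ^ 2))
                  * (x₂ / (ε + t ^ 2)) ^ 2) x₁|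
        ≤ C / (ε + x₁ ^ 2) := by
  refine ⟨51 / 2 * μ, by positivity, fun ε hε x₁ x₂ hx₂ => ?_⟩
  have hd : 0 < ε + x₁ ^ 2 := by positivity
  rw [deriv_deriv_velocity, (hasDerivAt_pressure μ ε x₂ x₁ hε).deriv,
    velocity_sub_pressure_eq μ ε x₁ x₂ hd.ne', abs_mul, abs_of_pos hμ]
  have hremainder := abs_neck_remainder_le hd (le_add_of_nonneg_left hε.le) hx₂.le
  exact ⟨rfl, (mul_le_mul_of_nonneg_left hremainder hμ.le).trans_eq (by ring)⟩
end
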